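/- Let α < 0 and φ(x) = (e^{-αx}-1)/(-α). For all x > 0, -(1+2αx)φ(x)² + x(5+3αx)φ(x) - 4x² ≥ 0. -/

import Mathlib

/-!
With `t = -α x > 0` and `u = e^t - 1 = -α φ(x)`, the expression times `α²` is
`-(1 - 2t) u² + t (5 - 3t) u - 4t²`, which splits as
`t (u - t) + (t - (1 - t) u) (u - t) + t (u² + 2 (1 - t) u - 2t)`.
The three factors `u - t`, `t - (1 - t) u` and `u² + 2 (1 - t) u - 2t` are nonnegative by
`e^t ≥ 1 + t`, `e^{-t} ≥ 1 - t` and `sinh t ≥ t` respectively.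
-/

open Real

lemma one_sub_mul_exp_le_one (t : ℝ) : (1 - t) * exp t ≤ 1 := by
  have h := mul_le_mul_of_nonneg_right (one_sub_le_exp_neg t) (exp_pos t).le
  rwa [← exp_add, neg_add_cancel, exp_zero] at h

lemma two_mul_mul_exp_le_exp_sq_sub_one {t : ℝ} (ht : 0 ≤ t) :
    2 * t * exp t ≤ exp t ^ 2 - 1 := by
  have h := mul_le_mul_of_nonneg_left (self_le_sinh_iff.mpr ht) (exp_pos t).le
  have hsinh : exp t * sinh t = (exp t ^ 2 - 1) / 2 := by
    rw [sinh_eq, exp_neg]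
    field_simp
  linarith

lemma quadratic_nonneg_of_bounds {t u : ℝ} (ht : 0 ≤ t) (hu : t ≤ u) (hu' : (1 - t) * u ≤ t)
    (hu'' : 0 ≤ u ^ 2 + 2 * (1 - t) * u - 2 * t) :
    0 ≤ -(1 - 2 * t) * u ^ 2 + t * (5 - 3 * t) * u - 4 * t ^ 2 := by
  have hsplit : -(1 - 2 * t) * u ^ 2 + t * (5 - 3 * t) * u - 4 * t ^ 2
      = t * (u - t) + (t - (1 - t) * u) * (u - t) + t * (u ^ 2 + 2 * (1 - t) * u - 2 * t) := by
    ring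
  rw [hsplit]
  have := sub_nonneg.mpr hu
  have := sub_nonneg.mpr hu'
  positivity

lemma quadratic_exp_sub_one_nonneg {t : ℝ} (ht : 0 ≤ t) :
    0 ≤ -(1 - 2 * t) * (exp t - 1) ^ 2 + t * (5 - 3 * t) * (exp t - 1) - 4 * t ^ 2 := by
  apply quadratic_nonneg_of_bounds ht
  · linarith [add_one_le_exp t]
  · linarith [one_sub_mul_exp_le_one t]
  · linarith [two_mul_mul_exp_le_exp_sq_sub_one ht]

theorem stmt_18 (α : ℝ) (hα : α < 0)
    (φ : ℝ → ℝ) (hφ : ∀ x, φ x = (Real.exp (-α * x) - 1) / (-α)) :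
    ∀ x : ℝ, 0 < x →
      0 ≤ -(1 + 2 * α * x) * (φ x) ^ 2 + x * (5 + 3 * α * x) * φ x
          - 4 * x ^ 2 := by
  intro x hx
  have hα0 : α ≠ 0 := hα.ne
  have hscale : α ^ 2 * (-(1 + 2 * α * x) * (φ x) ^ 2 + x * (5 + 3 * α * x) * φ x - 4 * x ^ 2)
      = -(1 - 2 * (-α * x)) * (exp (-α * x) - 1) ^ 2
        + (-α * x) * (5 - 3 * (-α * x)) * (exp (-α * x) - 1) - 4 * (-α * x) ^ 2 := by
    rw [hφ x]
    field_simp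
    ring
  have hα2 : 0 < α ^ 2 := by positivity
  rw [← mul_nonneg_iff_of_pos_left hα2, hscale]
  exact quadratic_exp_sub_one_nonneg (mul_nonneg (neg_nonneg.mpr hα.le) hx.le)
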